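/- Let (R_w, m_w) be local rings and (R, m) their ultraproduct with respect to an ultrafilter 𝒰 on the infinite set W, and let n be a natural number. Then the maximal ideal m of R can be generated by at most n elements if and only if for almost all w the maximal ideal m_w of R_w can be generated by at most n elements. -/

import Mathlib

/-! A finitely generated ideal of the ultraproduct is generated by the classes of families
`f₁, …, fₙ` exactly when almost every component ideal is generated by `f₁ w, …, fₙ w`:
a linear relation `g = ∑ cᵢ fᵢ` in the ultraproduct holds coordinatewise almost everywhere,
and conversely coordinatewise relations can be glued into one relation of families. For the
inclusion of the maximal ideal in the span one argues by contradiction, gluing elements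
`g w ∈ m_w` outside the span of `f₁ w, …, fₙ w` into one element of `m`. -/

/-- The ideal of the product ring consisting of families that vanish almost
everywhere with respect to the ultrafilter `𝒰`. -/
def almostZero {W : Type*} (𝒰 : Ultrafilter W) (R : W → Type*) [∀ w, CommRing (R w)] :
    Ideal (∀ w, R w) where
  carrier := {f | ∀ᶠ w in (𝒰 : Filter W), f w = 0}
  zero_mem' := Filter.Eventually.of_forall fun _ => rfl
  add_mem' := by
    intro f g hf hg
    filter_upwards [hf, hg] with w h1 h2
    simp [h1, h2]
  smul_mem' := by
    intro c f hf
    filter_upwards [hf] with w h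
    simp [h]

/-- The ultraproduct of a family of commutative rings with respect to an
ultrafilter: the product modulo the ideal of almost-everywhere-zero families. -/
abbrev Ultraproduct {W : Type*} (𝒰 : Ultrafilter W) (R : W → Type*) [∀ w, CommRing (R w)] :
    Type _ :=
  (∀ w, R w) ⧸ almostZero 𝒰 R

theorem isUnit_mk_iff {W : Type*} (𝒰 : Ultrafilter W) (R : W → Type*) [∀ w, CommRing (R w)]
    (f : ∀ w, R w) :
    IsUnit (Ideal.Quotient.mk (almostZero 𝒰 R) f) ↔ ∀ᶠ w in (𝒰 : Filter W), IsUnit (f w) := by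
  constructor
  · rintro ⟨u, hu⟩
    obtain ⟨g, hg⟩ := Ideal.Quotient.mk_surjective (↑u⁻¹ : Ultraproduct 𝒰 R)
    have h1 : Ideal.Quotient.mk (almostZero 𝒰 R) (f * g) =
        Ideal.Quotient.mk (almostZero 𝒰 R) 1 := by
      rw [map_mul, map_one, hg, ← hu, Units.mul_inv]
    have h2 : f * g - 1 ∈ almostZero 𝒰 R := Ideal.Quotient.eq.mp h1
    filter_upwards [h2] with w hw
    have : f w * g w = 1 := by
      have : f w * g w - 1 = 0 := hw
      linear_combination this
    exact IsUnit.of_mul_eq_one _ this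
  · intro hf
    classical
    set g : ∀ w, R w := fun w => if h : IsUnit (f w) then ((h.unit⁻¹ : (R w)ˣ) : R w) else 0
      with hgdef
    have h1 : f * g - 1 ∈ almostZero 𝒰 R := by
      filter_upwards [hf] with w hw
      have : f w * g w = 1 := by
        simp only [hgdef, dif_pos hw]
        exact hw.mul_val_inv
      show f w * g w - 1 = 0
      rw [this, sub_self]
    have h2 : Ideal.Quotient.mk (almostZero 𝒰 R) f *
        Ideal.Quotient.mk (almostZero 𝒰 R) g = 1 := by
      rw [← map_mul, ← map_one (Ideal.Quotient.mk (almostZero 𝒰 R))]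
      exact Ideal.Quotient.eq.mpr h1
    exact IsUnit.of_mul_eq_one _ h2

instance {W : Type*} (𝒰 : Ultrafilter W) (R : W → Type*) [∀ w, CommRing (R w)]
    [∀ w, Nontrivial (R w)] : Nontrivial (Ultraproduct 𝒰 R) := by
  refine ⟨0, 1, fun h => ?_⟩
  have h1 : (0 : ∀ w, R w) - 1 ∈ almostZero 𝒰 R := Ideal.Quotient.eq.mp h
  have h2 : ∀ᶠ w in (𝒰 : Filter W), (0 : R w) - 1 = 0 := h1
  obtain ⟨w, hw⟩ := h2.exists
  exact one_ne_zero (by linear_combination -hw)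

instance {W : Type*} (𝒰 : Ultrafilter W) (R : W → Type*) [∀ w, CommRing (R w)]
    [∀ w, IsLocalRing (R w)] : IsLocalRing (Ultraproduct 𝒰 R) := by
  refine IsLocalRing.of_nonunits_add ?_
  intro a b ha hb
  obtain ⟨f, rfl⟩ := Ideal.Quotient.mk_surjective a
  obtain ⟨g, rfl⟩ := Ideal.Quotient.mk_surjective b
  rw [mem_nonunits_iff, isUnit_mk_iff, ← Ultrafilter.eventually_not] at ha hb
  rw [mem_nonunits_iff, ← map_add, isUnit_mk_iff, ← Ultrafilter.eventually_not]
  filter_upwards [ha, hb] with w h1 h2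
  exact fun h => (IsLocalRing.nonunits_add h1 h2) h

/-- The ideal of infinitesimals of a local ring: the intersection of all powers
of the maximal ideal. -/
def infinitesimals (A : Type*) [CommRing A] [IsLocalRing A] : Ideal A :=
  ⨅ n : ℕ, IsLocalRing.maximalIdeal A ^ (n + 1)

namespace Ultraproduct

variable {W : Type*} {𝒰 : Ultrafilter W} {R : W → Type*} [∀ w, CommRing (R w)]

theorem mk_eq_mk_iff (f g : ∀ w, R w) :
    Ideal.Quotient.mk (almostZero 𝒰 R) f = Ideal.Quotient.mk (almostZero 𝒰 R) g ↔
      ∀ᶠ w in (𝒰 : Filter W), f w = g w := by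
  rw [Ideal.Quotient.eq]
  exact Filter.eventually_congr (.of_forall fun w => sub_eq_zero)

theorem mk_mem_span_range_mk_iff {ι : Type*} [Fintype ι] (f : ι → ∀ w, R w) (g : ∀ w, R w) :
    Ideal.Quotient.mk (almostZero 𝒰 R) g ∈
        Ideal.span (Set.range fun i => Ideal.Quotient.mk (almostZero 𝒰 R) (f i)) ↔
      ∀ᶠ w in (𝒰 : Filter W), g w ∈ Ideal.span (Set.range fun i => f i w) := by
  simp only [Ideal.mem_span_range_iff_exists_fun]
  constructor
  · rintro ⟨c, hc⟩
    choose c' hc' using fun i => Ideal.Quotient.mk_surjective (c i)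
    simp only [← hc', ← map_mul, ← map_sum, mk_eq_mk_iff] at hc
    filter_upwards [hc] with w hw
    exact ⟨fun i => c' i w, by simpa using hw⟩
  · intro h
    let c : ∀ w, ι → R w := fun w => Classical.epsilon fun c => ∑ i, c i * f i w = g w
    refine ⟨fun i => Ideal.Quotient.mk _ fun w => c w i, ?_⟩
    simp only [← map_mul, ← map_sum, mk_eq_mk_iff]
    filter_upwards [h] with w hw
    simpa using Classical.epsilon_spec hw

def IsUltraproductIdeal (I : Ideal (Ultraproduct 𝒰 R)) (J : ∀ w, Ideal (R w)) : Prop :=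
  ∀ g : ∀ w, R w, Ideal.Quotient.mk (almostZero 𝒰 R) g ∈ I ↔ ∀ᶠ w in (𝒰 : Filter W), g w ∈ J w

theorem isUltraproductIdeal_maximalIdeal [∀ w, IsLocalRing (R w)] :
    IsUltraproductIdeal (IsLocalRing.maximalIdeal (Ultraproduct 𝒰 R))
      fun w => IsLocalRing.maximalIdeal (R w) := fun g => by
  simp only [IsLocalRing.mem_maximalIdeal, mem_nonunits_iff]
  rw [isUnit_mk_iff, Ultrafilter.eventually_not]

section IsUltraproductIdeal

variable {I : Ideal (Ultraproduct 𝒰 R)} {J : ∀ w, Ideal (R w)} (hIJ : IsUltraproductIdeal I J)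
  {ι : Type*} [Fintype ι] (f : ι → ∀ w, R w)
include hIJ

theorem span_range_mk_le_iff :
    Ideal.span (Set.range fun i => Ideal.Quotient.mk (almostZero 𝒰 R) (f i)) ≤ I ↔
      ∀ᶠ w in (𝒰 : Filter W), Ideal.span (Set.range fun i => f i w) ≤ J w := by
  simp only [Ideal.span_le, Set.range_subset_iff, SetLike.mem_coe, fun i => hIJ (f i)]
  exact Filter.eventually_all.symm

theorem le_span_range_mk_iff :
    I ≤ Ideal.span (Set.range fun i => Ideal.Quotient.mk (almostZero 𝒰 R) (f i)) ↔
      ∀ᶠ w in (𝒰 : Filter W), J w ≤ Ideal.span (Set.range fun i => f i w) := by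
  constructor
  · intro hle
    by_contra hbad
    rw [← Ultrafilter.eventually_not] at hbad
    let g : ∀ w, R w := fun w =>
      Classical.epsilon fun x => x ∈ J w ∧ x ∉ Ideal.span (Set.range fun i => f i w)
    have hg : ∀ᶠ w in (𝒰 : Filter W),
        g w ∈ J w ∧ g w ∉ Ideal.span (Set.range fun i => f i w) := by
      filter_upwards [hbad] with w hw
      exact Classical.epsilon_spec (SetLike.not_le_iff_exists.mp hw)
    have hgI : Ideal.Quotient.mk _ g ∈ I := (hIJ g).mpr (hg.mono fun _ => And.left)
    obtain ⟨w, hw, hw'⟩ := ((mk_mem_span_range_mk_iff f g).mp (hle hgI)).and hg |>.exists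
    exact hw'.2 hw
  · intro h a ha
    obtain ⟨g, rfl⟩ := Ideal.Quotient.mk_surjective a
    rw [mk_mem_span_range_mk_iff]
    filter_upwards [(hIJ g).mp ha, h] with w hgJ hJ using hJ hgJ

theorem span_range_mk_eq_iff :
    Ideal.span (Set.range fun i => Ideal.Quotient.mk (almostZero 𝒰 R) (f i)) = I ↔
      ∀ᶠ w in (𝒰 : Filter W), Ideal.span (Set.range fun i => f i w) = J w := by
  simp only [le_antisymm_iff, span_range_mk_le_iff hIJ, le_span_range_mk_iff hIJ,
    Filter.eventually_and]

end IsUltraproductIdeal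

end Ultraproduct

theorem stmt_18_general {W : Type*} (𝒰 : Ultrafilter W) (R : W → Type*)
    [∀ w, CommRing (R w)] [∀ w, IsLocalRing (R w)] (n : ℕ) :
    (∃ x : Fin n → Ultraproduct 𝒰 R,
        Ideal.span (Set.range x) = IsLocalRing.maximalIdeal (Ultraproduct 𝒰 R)) ↔
      ∀ᶠ w in (𝒰 : Filter W), ∃ x : Fin n → R w,
        Ideal.span (Set.range x) = IsLocalRing.maximalIdeal (R w) := by
  have key (f : Fin n → ∀ w, R w) :=
    Ultraproduct.span_range_mk_eq_iff
      (Ultraproduct.isUltraproductIdeal_maximalIdeal (𝒰 := 𝒰)) f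
  constructor
  · rintro ⟨x, hx⟩
    choose f hf using fun i => Ideal.Quotient.mk_surjective (x i)
    obtain rfl : (fun i => Ideal.Quotient.mk _ (f i)) = x := funext hf
    exact ((key f).mp hx).mono fun w hw => ⟨_, hw⟩
  · intro h
    let f : Fin n → ∀ w, R w := fun i w =>
      Classical.epsilon (fun x : Fin n → R w =>
        Ideal.span (Set.range x) = IsLocalRing.maximalIdeal (R w)) i
    exact ⟨_, (key f).mpr (h.mono fun w hw => Classical.epsilon_spec hw)⟩

/-- The maximal ideal of an ultraproduct of local rings is generated by at most
`n` elements iff almost all the maximal ideals of the components are. -/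
theorem stmt_18 {W : Type*} [Infinite W] (𝒰 : Ultrafilter W) (R : W → Type*)
    [∀ w, CommRing (R w)] [∀ w, IsLocalRing (R w)] (n : ℕ) :
    (∃ x : Fin n → Ultraproduct 𝒰 R,
        Ideal.span (Set.range x) = IsLocalRing.maximalIdeal (Ultraproduct 𝒰 R)) ↔
      ∀ᶠ w in (𝒰 : Filter W), ∃ x : Fin n → R w,
        Ideal.span (Set.range x) = IsLocalRing.maximalIdeal (R w) :=
  stmt_18_general 𝒰 R n
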